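/- Under adversarial training dynamics, where w^(t) minimizes w ↦ E[max(0, 1 - y·w^⊤(x + δ^(t)(x,y)))] + (λ/2)‖w‖₂² with δ^(t)(x,y) = -yε·sign(w^(t-1)), for any non-robust feature i (|μᵢ| < ε, μᵢ > 0): if wᵢ^(t) > 0 then wᵢ^(t+1) ≤ 0, and if wᵢ^(t) < 0 then wᵢ^(t+1) ≥ 0. -/

import Mathlib

/-!
Write `s = sign w⁽ᵗ⁾`. Since `y² = 1`, the adversarial hinge loss of `w` at a labelled point
`(x, y)` is the clean hinge loss `max 0 (1 + ε⟨w, s⟩ - y⟨w, x⟩)` with the margin enlarged by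
`ε⟨w, s⟩`. Setting `wᵢ` to `0` shifts the margin by `-ε wᵢ sᵢ` and removes `wᵢ xᵢ` from the
score. Given `y`, `xᵢ` is independent of the other features, so Jensen's inequality for the
convex hinge in the variable `xᵢ` (mean `y μᵢ`) shows that this never increases the hinge loss
when `wᵢ (μᵢ - ε sᵢ) ≤ 0`, while it strictly decreases the ridge penalty if `wᵢ ≠ 0`. Hence a
nonzero coordinate of the minimiser `w⁽ᵗ⁺¹⁾` has the sign of `μᵢ - ε sᵢ`, which is `-sᵢ` when
`|μᵢ| < ε`.
-/

open MeasureTheory Finset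
open scoped ENNReal

/-- The joint distribution of `(x,y)` on `ℝ^d × {-1,1}`: with probability `q` the label is `1`
and the features are drawn from the product measure `Measure.pi ηp` (features conditionally
independent given the label), with probability `1-q` the label is `-1` and the features are
drawn from `Measure.pi ηn`. -/
noncomputable def jointMeasure {d : ℕ} (ηp ηn : Fin d → Measure ℝ) (q : ℝ≥0∞) :
    Measure ((Fin d → ℝ) × ℝ) :=
  q • (Measure.pi ηp).map (fun x => (x, (1 : ℝ))) +
    (1 - q) • (Measure.pi ηn).map (fun x => (x, (-1 : ℝ)))

/-- The regularized soft-SVM objective. -/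
noncomputable def svmLoss {d : ℕ} (μ : Measure ((Fin d → ℝ) × ℝ)) (lam : ℝ)
    (w : Fin d → ℝ) : ℝ :=
  (∫ p, max 0 (1 - p.2 * ∑ i, w i * p.1 i) ∂μ) + lam / 2 * ∑ i, (w i) ^ 2

/-- One step of adversarial training: the objective obtained by training on the adversarial
examples `x + δ(x,y)` with the worst-case perturbation `δ(x,y) = -yε·sign(wprev)` computed
against the previous model `wprev`. -/
noncomputable def atLoss {d : ℕ} (μ : Measure ((Fin d → ℝ) × ℝ)) (lam ε : ℝ)
    (wprev w : Fin d → ℝ) : ℝ :=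
  (∫ p, max 0 (1 - p.2 * ∑ i, w i * (p.1 i + (-p.2 * ε * Real.sign (wprev i)))) ∂μ) +
    lam / 2 * ∑ i, (w i) ^ 2

section Resampling

variable {ι : Type*} [Fintype ι] [DecidableEq ι] {α : ι → Type*} [∀ j, MeasurableSpace (α j)]
  (μ : ∀ j, Measure (α j)) [∀ j, IsProbabilityMeasure (μ j)] (i : ι)

theorem measurePreserving_update :
    MeasurePreserving (fun p : (∀ j, α j) × α i => Function.update p.1 i p.2)
      ((Measure.pi μ).prod (μ i)) (Measure.pi μ) := by
  refine ⟨measurable_update', (Measure.pi_eq fun s hs => ?_).symm⟩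
  have hpre : (fun p : (∀ j, α j) × α i => Function.update p.1 i p.2) ⁻¹' Set.univ.pi s =
      Set.univ.pi (Function.update s i Set.univ) ×ˢ s i := by
    ext ⟨x, t⟩
    simp only [Set.mem_preimage, Set.mem_univ_pi, Set.mem_prod, Function.forall_update_iff]
    rw [Function.forall_update_iff (p := fun j S => x j ∈ S)]
    simp [and_comm]
  rw [Measure.map_apply measurable_update' (.univ_pi hs), hpre, Measure.prod_prod,
    Measure.pi_pi, Fintype.prod_eq_prod_compl_mul i, Fintype.prod_eq_prod_compl_mul i]
  simp only [Function.update_self, measure_univ, mul_one]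
  exact congrArg (· * _) <| prod_congr rfl fun j hj =>
    by rw [Function.update_of_ne (by simpa using hj)]

variable {E : Type*} [NormedAddCommGroup E] [NormedSpace ℝ E] {f : (∀ j, α j) → E}

theorem MeasureTheory.Integrable.integral_update (hf : Integrable f (Measure.pi μ)) :
    Integrable (fun x => ∫ t, f (Function.update x i t) ∂μ i) (Measure.pi μ) :=
  ((measurePreserving_update μ i).integrable_comp_of_integrable hf).integral_prod_left

theorem integral_eq_integral_integral_update (hf : Integrable f (Measure.pi μ)) :
    ∫ x, f x ∂Measure.pi μ = ∫ x, ∫ t, f (Function.update x i t) ∂μ i ∂Measure.pi μ := by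
  have hmp := measurePreserving_update μ i
  calc ∫ x, f x ∂Measure.pi μ
      = ∫ p, f (Function.update p.1 i p.2) ∂(Measure.pi μ).prod (μ i) := by
        rw [← integral_map hmp.measurable.aemeasurable (by rw [hmp.map_eq]; exact hf.1),
          hmp.map_eq]
    _ = _ := integral_prod _ (hmp.integrable_comp_of_integrable hf)

end Resampling

theorem max_zero_add_mul_integral_le (η : Measure ℝ) [IsProbabilityMeasure η]
    (hη : Integrable (fun t : ℝ => t) η) (c a : ℝ) :
    max 0 (c + a * ∫ t, t ∂η) ≤ ∫ t, max 0 (c + a * t) ∂η := by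
  have haff : Integrable (fun t => c + a * t) η := (integrable_const c).add (hη.const_mul a)
  have hconv : ConvexOn ℝ Set.univ (fun s : ℝ => max 0 s) :=
    (convexOn_const 0 convex_univ).sup (convexOn_id convex_univ)
  have hjensen := hconv.map_integral_le (by fun_prop) isClosed_univ (by simp) haff
    ((integrable_zero ℝ ℝ η).sup haff)
  rwa [integral_add (integrable_const c) (hη.const_mul a), integral_const, integral_const_mul,
    probReal_univ, one_smul] at hjensen

section Hinge

variable {ι : Type*} [Fintype ι]

theorem integrable_max_zero_affine (η : ι → Measure ℝ) [∀ j, IsProbabilityMeasure (η j)]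
    (hη : ∀ j, Integrable (fun t : ℝ => t) (η j)) (c : ℝ) (v : ι → ℝ) :
    Integrable (fun x => max 0 (c + ∑ j, v j * x j)) (Measure.pi η) := by
  have hcoord : ∀ j, Integrable (fun x : ι → ℝ => x j) (Measure.pi η) := fun j =>
    (measurePreserving_eval η j).integrable_comp_of_integrable (hη j)
  exact (integrable_zero _ _ _).sup
    ((integrable_const c).add (integrable_finsetSum _ fun j _ => (hcoord j).const_mul (v j)))

theorem one_sub_mul_sum_adversarial {y : ℝ} (hy : y ^ 2 = 1) (ε : ℝ) (w s x : ι → ℝ) :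
    1 - y * ∑ j, w j * (x j + -y * ε * s j) =
      (1 + ε * ∑ j, w j * s j) + ∑ j, (-y • w) j * x j := by
  have hsplit :
      ∑ j, w j * (x j + -y * ε * s j) = ∑ j, w j * x j - y * ε * ∑ j, w j * s j := by
    rw [mul_sum, ← sum_sub_distrib]
    exact sum_congr rfl fun j _ => by ring
  have hneg : ∑ j, (-y • w) j * x j = -y * ∑ j, w j * x j := by
    rw [mul_sum]
    exact sum_congr rfl fun j _ => by simp only [Pi.smul_apply, smul_eq_mul]; ring
  rw [hsplit, hneg]
  linear_combination (ε * ∑ j, w j * s j) * hy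

variable [DecidableEq ι]

theorem update_of_mem_compl {β : Type*} (w : ι → β) {i j : ι} (b : β)
    (hj : j ∈ ({i}ᶜ : Finset ι)) : Function.update w i b j = w j :=
  Function.update_of_ne (by simpa using hj) b w

theorem sum_mul_update_eq (v x : ι → ℝ) (i : ι) (t : ℝ) :
    ∑ j, v j * Function.update x i t j = ∑ j, Function.update v i 0 j * x j + v i * t := by
  rw [Fintype.sum_eq_add_sum_compl i, Fintype.sum_eq_add_sum_compl i (fun j => _ * x j)]
  simp only [Function.update_self, zero_mul, zero_add, add_comm (v i * t)]
  congr 1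
  exact sum_congr rfl fun j hj => by rw [update_of_mem_compl x t hj, update_of_mem_compl v 0 hj]

theorem sum_update_zero_mul (w u : ι → ℝ) (i : ι) :
    ∑ j, Function.update w i 0 j * u j = ∑ j, w j * u j - w i * u i := by
  rw [Fintype.sum_eq_add_sum_compl i, Fintype.sum_eq_add_sum_compl i (fun j => w j * u j)]
  simp only [Function.update_self, zero_mul, zero_add, add_sub_cancel_left]
  exact sum_congr rfl fun j hj => by rw [update_of_mem_compl w 0 hj]

theorem sum_update_zero_sq_lt (w : ι → ℝ) {i : ι} (hi : w i ≠ 0) :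
    ∑ j, Function.update w i 0 j ^ 2 < ∑ j, w j ^ 2 := by
  rw [Fintype.sum_eq_add_sum_compl i, Fintype.sum_eq_add_sum_compl i (fun j => w j ^ 2),
    Function.update_self, zero_pow two_ne_zero, zero_add,
    sum_congr rfl fun j hj => by rw [update_of_mem_compl w 0 hj]]
  exact lt_add_of_pos_left _ (by positivity)

/-- The independent coordinate `x i` is integrated out first; Jensen's inequality for the convex
hinge then replaces it by its mean, which the hypothesis `h` absorbs into the intercept. -/
theorem integral_max_zero_update_zero_le (η : ι → Measure ℝ) [∀ j, IsProbabilityMeasure (η j)]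
    (hη : ∀ j, Integrable (fun t : ℝ => t) (η j)) (i : ι) (v : ι → ℝ) {c c' : ℝ}
    (h : c' ≤ c + v i * ∫ t, t ∂η i) :
    ∫ x, max 0 (c' + ∑ j, Function.update v i 0 j * x j) ∂Measure.pi η ≤
      ∫ x, max 0 (c + ∑ j, v j * x j) ∂Measure.pi η := by
  have hf := integrable_max_zero_affine η hη c v
  rw [integral_eq_integral_integral_update η i hf]
  refine integral_mono (integrable_max_zero_affine η hη c' _) (hf.integral_update η i)
    fun x => ?_
  set S := ∑ j, Function.update v i 0 j * x j
  calc max 0 (c' + S) ≤ max 0 ((c + S) + v i * ∫ t, t ∂η i) := max_le_max le_rfl (by linarith)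
    _ ≤ ∫ t, max 0 ((c + S) + v i * t) ∂η i := max_zero_add_mul_integral_le _ (hη i) _ _
    _ = ∫ t, max 0 (c + ∑ j, v j * Function.update x i t j) ∂η i := by
      simp only [S, sum_mul_update_eq, add_assoc]

end Hinge

section AdversarialTraining

variable {d : ℕ} (ηp ηn : Fin d → Measure ℝ) {q : ℝ≥0∞}

theorem integral_jointMeasure (hq : q ≠ ∞) {f : (Fin d → ℝ) × ℝ → ℝ} (hf : Measurable f)
    (hfp : Integrable (fun x => f (x, 1)) (Measure.pi ηp))
    (hfn : Integrable (fun x => f (x, -1)) (Measure.pi ηn)) :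
    ∫ p, f p ∂jointMeasure ηp ηn q =
      q.toReal * ∫ x, f (x, 1) ∂Measure.pi ηp +
        (1 - q).toReal * ∫ x, f (x, -1) ∂Measure.pi ηn := by
  have hmp : Measurable fun x : Fin d → ℝ => (x, (1 : ℝ)) := by fun_prop
  have hmn : Measurable fun x : Fin d → ℝ => (x, (-1 : ℝ)) := by fun_prop
  have hfp' := (integrable_map_measure hf.aestronglyMeasurable hmp.aemeasurable).mpr hfp
  have hfn' := (integrable_map_measure hf.aestronglyMeasurable hmn.aemeasurable).mpr hfn
  rw [jointMeasure, integral_add_measure (hfp'.smul_measure hq)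
      (hfn'.smul_measure (ENNReal.sub_ne_top ENNReal.one_ne_top)),
    integral_smul_measure, integral_smul_measure,
    integral_map hmp.aemeasurable hf.aestronglyMeasurable,
    integral_map hmn.aemeasurable hf.aestronglyMeasurable, smul_eq_mul, smul_eq_mul]

variable [∀ j, IsProbabilityMeasure (ηp j)] [∀ j, IsProbabilityMeasure (ηn j)]

theorem atLoss_jointMeasure (hq : q ≠ ∞) (hηp : ∀ j, Integrable (fun t : ℝ => t) (ηp j))
    (hηn : ∀ j, Integrable (fun t : ℝ => t) (ηn j)) (lam ε : ℝ) (wprev w : Fin d → ℝ) :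
    atLoss (jointMeasure ηp ηn q) lam ε wprev w =
      q.toReal * ∫ x, max 0 ((1 + ε * ∑ j, w j * Real.sign (wprev j)) + ∑ j, (-w) j * x j)
          ∂Measure.pi ηp +
        (1 - q).toReal * ∫ x, max 0 ((1 + ε * ∑ j, w j * Real.sign (wprev j)) + ∑ j, w j * x j)
          ∂Measure.pi ηn +
        lam / 2 * ∑ j, w j ^ 2 := by
  rw [atLoss, integral_jointMeasure ηp ηn hq (by fun_prop)]
  -- two passes, so that `neg_neg` cannot rewrite `-(-1)` before the margin identity matches
  all_goals simp only [one_sub_mul_sum_adversarial (one_pow 2),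
    one_sub_mul_sum_adversarial neg_one_sq]
  all_goals simp only [neg_neg, one_smul, neg_smul]
  exacts [integrable_max_zero_affine ηp hηp _ _, integrable_max_zero_affine ηn hηn _ _]

theorem atLoss_update_zero_lt (hq : q ≠ ∞) (hηp : ∀ j, Integrable (fun t : ℝ => t) (ηp j))
    (hηn : ∀ j, Integrable (fun t : ℝ => t) (ηn j)) {μv : Fin d → ℝ}
    (hmeanp : ∀ i, ∫ t, t ∂ηp i = μv i) (hmeann : ∀ i, ∫ t, t ∂ηn i = -μv i)
    {lam : ℝ} (hlam : 0 < lam) (ε : ℝ) (wprev w : Fin d → ℝ) {i : Fin d} (hwi : w i ≠ 0)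
    (hflip : w i * (μv i - ε * Real.sign (wprev i)) ≤ 0) :
    atLoss (jointMeasure ηp ηn q) lam ε wprev (Function.update w i 0) <
      atLoss (jointMeasure ηp ηn q) lam ε wprev w := by
  set m := 1 + ε * ∑ j, w j * Real.sign (wprev j)
  set m' := 1 + ε * ∑ j, Function.update w i 0 j * Real.sign (wprev j)
  have hmargin : m' = m - ε * (w i * Real.sign (wprev i)) := by
    simp only [m, m', sum_update_zero_mul]; ring
  have hlabel_pos := integral_max_zero_update_zero_le ηp hηp i (-w) (c := m) (c' := m')
    (by rw [hmargin, hmeanp, Pi.neg_apply]; linarith)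
  have hlabel_neg := integral_max_zero_update_zero_le ηn hηn i w (c := m) (c' := m')
    (by rw [hmargin, hmeann]; linarith)
  rw [show Function.update (-w) i 0 = -Function.update w i 0 by
    simpa using Function.update_neg w i 0] at hlabel_pos
  rw [atLoss_jointMeasure ηp ηn hq hηp hηn, atLoss_jointMeasure ηp ηn hq hηp hηn]
  exact add_lt_add_of_le_of_lt
    (add_le_add (mul_le_mul_of_nonneg_left hlabel_pos ENNReal.toReal_nonneg)
      (mul_le_mul_of_nonneg_left hlabel_neg ENNReal.toReal_nonneg))
    (mul_lt_mul_of_pos_left (sum_update_zero_sq_lt w hwi) (half_pos hlam))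

end AdversarialTraining

theorem adversarial_training_sign_flip_general {d : ℕ} (ηp ηn : Fin d → Measure ℝ)
    [∀ i, IsProbabilityMeasure (ηp i)] [∀ i, IsProbabilityMeasure (ηn i)]
    (q : ℝ≥0∞) (hq : q ≤ 1) (lam ε : ℝ) (hlam : 0 < lam)
    (μv : Fin d → ℝ)
    (hip : ∀ j, Integrable (fun t : ℝ => t) (ηp j))
    (hin : ∀ j, Integrable (fun t : ℝ => t) (ηn j))
    (hmeanp : ∀ i, (∫ t, t ∂(ηp i)) = μv i)
    (hmeann : ∀ i, (∫ t, t ∂(ηn i)) = -(μv i))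
    (wt wnext : Fin d → ℝ)
    (hmin : ∀ w, atLoss (jointMeasure ηp ηn q) lam ε wt wnext ≤
      atLoss (jointMeasure ηp ηn q) lam ε wt w)
    (i : Fin d) (hpos : 0 < μv i) (hnonrobust : μv i < ε) :
    (0 < wt i → wnext i ≤ 0) ∧ (wt i < 0 → 0 ≤ wnext i) := by
  have no_flip (hne : wnext i ≠ 0) : ¬ wnext i * (μv i - ε * Real.sign (wt i)) ≤ 0 :=
    fun hflip => (hmin _).not_gt <| atLoss_update_zero_lt ηp ηn
      (ne_top_of_le_ne_top ENNReal.one_ne_top hq) hip hin hmeanp hmeann hlam ε wt wnext hne hflip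
  refine ⟨fun hwt => ?_, fun hwt => ?_⟩
  · by_contra! hnext
    refine no_flip hnext.ne' (mul_nonpos_of_nonneg_of_nonpos hnext.le ?_)
    rw [Real.sign_of_pos hwt]
    linarith
  · by_contra! hnext
    refine no_flip hnext.ne (mul_nonpos_of_nonpos_of_nonneg hnext.le ?_)
    rw [Real.sign_of_neg hwt]
    linarith

/-- dynamics of adversarial training. If `w⁽ᵗ⁺¹⁾` minimizes the training
objective on the adversarial examples generated against `w⁽ᵗ⁾`, then for any non-robust
feature `i` (`0 < μᵢ < ε`): `wᵢ⁽ᵗ⁾ > 0` implies `wᵢ⁽ᵗ⁺¹⁾ ≤ 0`, and `wᵢ⁽ᵗ⁾ < 0` implies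
`wᵢ⁽ᵗ⁺¹⁾ ≥ 0`. -/
theorem adversarial_training_sign_flip {d : ℕ} (ηp ηn : Fin d → Measure ℝ)
    [∀ i, IsProbabilityMeasure (ηp i)] [∀ i, IsProbabilityMeasure (ηn i)]
    (q : ℝ≥0∞) (hq : q ≤ 1) (lam ε : ℝ) (hlam : 0 < lam) (hε : 0 < ε)
    (μv : Fin d → ℝ)
    (hip : ∀ j, Integrable (fun t : ℝ => t) (ηp j))
    (hin : ∀ j, Integrable (fun t : ℝ => t) (ηn j))
    (hmeanp : ∀ i, (∫ t, t ∂(ηp i)) = μv i)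
    (hmeann : ∀ i, (∫ t, t ∂(ηn i)) = -(μv i))
    (wt wnext : Fin d → ℝ)
    (hmin : ∀ w, atLoss (jointMeasure ηp ηn q) lam ε wt wnext ≤
      atLoss (jointMeasure ηp ηn q) lam ε wt w)
    (i : Fin d) (hpos : 0 < μv i) (hnonrobust : μv i < ε) :
    (0 < wt i → wnext i ≤ 0) ∧ (wt i < 0 → 0 ≤ wnext i) :=
  adversarial_training_sign_flip_general ηp ηn q hq lam ε hlam μv hip hin hmeanp hmeann wt wnext
    hmin i hpos hnonrobust
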